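/- Let $T:V\to L$ be a relative Rota-Baxter operator on a Leibniz algebra with respect to a representation $(V;\rho^l,\rho^r)$. Every 1-cocycle $\phi:V\to L$ for the Leibniz algebra cohomology of $(V,[\cdot,\cdot]_T)$ with coefficients in $(L;\rho^l_T,\rho^r_T)$ (i.e., $\rho^l_T(u)\phi(v)+\rho^r_T(v)\phi(u)-\phi([u,v]_T)=0$ for all $u,v$) is a 1-cocycle for the Leibniz triple system cohomology of $(V,\{u,v,w\}_T=[[u,v]_T,w]_T)$ with coefficients in $(R_T,M_T,L_T)$, i.e., $L_T(u,v)\phi(w)+M_T(u,w)\phi(v)+R_T(v,w)\phi(u)-\phi(\{u,v,w\}_T)=0$. -/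

import Mathlib

def IsTrilin (K : Type*) [Field K] {L M : Type*} [AddCommGroup L] [Module K L]
    [AddCommGroup M] [Module K M] (t : L → L → L → M) : Prop :=
  (∀ y z, IsLinearMap K fun x => t x y z) ∧ (∀ x z, IsLinearMap K fun y => t x y z) ∧
    (∀ x y, IsLinearMap K fun z => t x y z)

def LTSIdent {L : Type*} [AddCommGroup L] (t : L → L → L → L) : Prop :=
  (∀ a b c d e, t a b (t c d e) =
      t (t a b c) d e - t (t a b d) c e - t (t a b e) c d + t (t a b e) d c) ∧
  (∀ a b c d e, t a (t b c d) e =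
      t (t a b c) d e - t (t a c b) d e - t (t a d b) c e + t (t a d c) b e)

def IsLTS (K : Type*) [Field K] {L : Type*} [AddCommGroup L] [Module K L]
    (t : L → L → L → L) : Prop := IsTrilin K t ∧ LTSIdent t

def sd {L V : Type*} [AddCommGroup L] [AddCommGroup V]
    (t : L → L → L → L) (l m r : L → L → V → V) :
    L × V → L × V → L × V → L × V :=
  fun p q s => (t p.1 q.1 s.1, l p.1 q.1 s.2 + m p.1 s.1 q.2 + r q.1 s.1 p.2)

def IsRep (K : Type*) [Field K] {L V : Type*} [AddCommGroup L] [Module K L]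
    [AddCommGroup V] [Module K V] (t : L → L → L → L) (l m r : L → L → V → V) : Prop :=
  IsLTS K (sd t l m r)

def IsRRB {K : Type*} [Field K] {L V : Type*} [AddCommGroup L] [Module K L]
    [AddCommGroup V] [Module K V] (t : L → L → L → L) (l m r : L → L → V → V)
    (T : V →ₗ[K] L) : Prop :=
  ∀ u v w, t (T u) (T v) (T w) =
    T (l (T u) (T v) w + m (T u) (T w) v + r (T v) (T w) u)

def IsRB {K : Type*} [Field K] {L : Type*} [AddCommGroup L] [Module K L]
    (t : L → L → L → L) (R : L →ₗ[K] L) : Prop :=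
  ∀ x y z, t (R x) (R y) (R z) =
    R (t (R x) (R y) z + t (R x) y (R z) + t x (R y) (R z))

def IsNij {K : Type*} [Field K] {A : Type*} [AddCommGroup A] [Module K A]
    (t : A → A → A → A) (N : A →ₗ[K] A) : Prop :=
  ∀ x y z, t (N x) (N y) (N z) =
    N (t (N x) (N y) z) + N (t x (N y) (N z)) + N (t (N x) y (N z))
      - N (N (t (N x) y z)) - N (N (t x (N y) z)) - N (N (t x y (N z)))
      + N (N (N (t x y z)))

def IsLeib {K : Type*} [Field K] {L : Type*} [AddCommGroup L] [Module K L]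
    (b : L →ₗ[K] L →ₗ[K] L) : Prop :=
  ∀ x y z, b x (b y z) = b (b x y) z - b (b x z) y

def IsLeibRep {K : Type*} [Field K] {L V : Type*} [AddCommGroup L] [Module K L]
    [AddCommGroup V] [Module K V] (b : L →ₗ[K] L →ₗ[K] L)
    (ρl ρr : L →ₗ[K] Module.End K V) : Prop :=
  (∀ x y, ρl (b x y) = ρr y * ρl x - ρl x * ρr y) ∧
    (∀ x y, ρl (b x y) = ρl x * ρl y + ρr y * ρl x) ∧
    (∀ x y, ρr (b x y) = ρr y * ρr x - ρr x * ρr y)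

/-- The induced Leibniz bracket `[u,v]_T = ρˡ(Tu)v + ρʳ(Tv)u` on `V`. -/
def bT {K : Type*} [Field K] {L V : Type*} [AddCommGroup L] [Module K L]
    [AddCommGroup V] [Module K V] (ρl ρr : L →ₗ[K] Module.End K V)
    (T : V →ₗ[K] L) (u v : V) : V :=
  ρl (T u) v + ρr (T v) u

/-- `ρˡ_T(u)x = [Tu,x] - T ρʳ(x) u`. -/
def rlT {K : Type*} [Field K] {L V : Type*} [AddCommGroup L] [Module K L]
    [AddCommGroup V] [Module K V] (b : L →ₗ[K] L →ₗ[K] L)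
    (ρr : L →ₗ[K] Module.End K V) (T : V →ₗ[K] L) (u : V) (x : L) : L :=
  b (T u) x - T (ρr x u)

/-- `ρʳ_T(u)x = [x,Tu] - T ρˡ(x) u`. -/
def rrT {K : Type*} [Field K] {L V : Type*} [AddCommGroup L] [Module K L]
    [AddCommGroup V] [Module K V] (b : L →ₗ[K] L →ₗ[K] L)
    (ρl : L →ₗ[K] Module.End K V) (T : V →ₗ[K] L) (u : V) (x : L) : L :=
  b x (T u) - T (ρl x u)

theorem rrT_add {K : Type*} [Field K] {L V : Type*} [AddCommGroup L] [Module K L]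
    [AddCommGroup V] [Module K V] (b : L →ₗ[K] L →ₗ[K] L)
    (ρl : L →ₗ[K] Module.End K V) (T : V →ₗ[K] L) (u : V) (x y : L) :
    rrT b ρl T u (x + y) = rrT b ρl T u x + rrT b ρl T u y := by
  simp only [rrT, map_add, LinearMap.add_apply]
  abel

theorem stmt17_general {K : Type*} [Field K] {L V : Type*} [AddCommGroup L] [Module K L]
    [AddCommGroup V] [Module K V]
    (b : L →ₗ[K] L →ₗ[K] L)
    (ρl ρr : L →ₗ[K] Module.End K V)
    (T : V →ₗ[K] L)
    (φ : V →ₗ[K] L)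
    (hφ : ∀ u v, rlT b ρr T u (φ v) + rrT b ρl T v (φ u) - φ (bT ρl ρr T u v) = 0) :
    ∀ u v w,
      rlT b ρr T (bT ρl ρr T u v) (φ w)
        + rrT b ρl T w (rlT b ρr T u (φ v))
        + rrT b ρl T w (rrT b ρl T v (φ u))
        - φ (bT ρl ρr T (bT ρl ρr T u v) w) = 0 := by
  intro u v w
  rw [add_assoc _ (rrT b ρl T w _), ← rrT_add, sub_eq_zero.mp (hφ u v)]
  exact hφ (bT ρl ρr T u v) w

theorem stmt17 {K : Type*} [Field K] {L V : Type*} [AddCommGroup L] [Module K L]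
    [AddCommGroup V] [Module K V]
    (b : L →ₗ[K] L →ₗ[K] L) (hb : IsLeib b)
    (ρl ρr : L →ₗ[K] Module.End K V) (hrep : IsLeibRep b ρl ρr)
    (T : V →ₗ[K] L) (hT : ∀ u v, b (T u) (T v) = T (ρl (T u) v + ρr (T v) u))
    (φ : V →ₗ[K] L)
    (hφ : ∀ u v, rlT b ρr T u (φ v) + rrT b ρl T v (φ u) - φ (bT ρl ρr T u v) = 0) :
    ∀ u v w,
      rlT b ρr T (bT ρl ρr T u v) (φ w)
        + rrT b ρl T w (rlT b ρr T u (φ v))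
        + rrT b ρl T w (rrT b ρl T v (φ u))
        - φ (bT ρl ρr T (bT ρl ρr T u v) w) = 0 :=
  stmt17_general b ρl ρr T φ hφ
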